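/- Along any solution of the Chow–Yang Ricci flow ODE (ρ μ' = 4(μ−1), ρ' = −4(μ^{-1}+3)) with μ(0) < 1 and ρ(0) > 0, there is a finite extinction time T > 0 such that μ(t) → 0 and ρ(t) → 0 as t → T⁻. -/

import Mathlib

/-!
The system is integrable. Besides the invariant `c = ρ (1 - μ)⁴ / μ`, the quantity
`t + (c/4) Ψ(μ)` is conserved, where `Ψ = extinctionClock` has `Ψ' = μ / (1 - μ)⁵` and
`Ψ(0) = 0`. Hence `μ(t) = Ψ⁻¹(4 (T - t) / c)` with `T = (c/4) Ψ(μ(0))`, and this formula (with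
`ρ = c μ / (1 - μ)⁴`) is a solution on all of `(-∞, T)` extending the given one. Maximality forces
`D = (-∞, T)`, and `μ, ρ → 0` as `t → T⁻` because `Ψ⁻¹(0) = 0`.
-/

open Set Filter Topology Function

section InvFunOn

variable {α β : Type*} [LinearOrder α] [Nonempty α] [LinearOrder β] {f : α → β} {s : Set α}

theorem StrictMonoOn.invOn_invFunOn (hf : StrictMonoOn f s) :
    InvOn (invFunOn f s) f s (f '' s) :=
  hf.injOn.bijOn_image.invOn_invFunOn

theorem StrictMonoOn.image_invFunOn_image (hf : StrictMonoOn f s) :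
    invFunOn f s '' (f '' s) = s :=
  (BijOn.symm hf.invOn_invFunOn.symm hf.injOn.bijOn_image).image_eq

theorem StrictMonoOn.monotoneOn_invFunOn (hf : StrictMonoOn f s) :
    MonotoneOn (invFunOn f s) (f '' s) := by
  intro a ha b hb hab
  have hmem : ∀ c ∈ f '' s, invFunOn f s c ∈ s := fun c hc =>
    hf.image_invFunOn_image.subset (mem_image_of_mem _ hc)
  rw [← hf.le_iff_le (hmem a ha) (hmem b hb), hf.invOn_invFunOn.2 ha, hf.invOn_invFunOn.2 hb]
  exact hab

variable [TopologicalSpace α] [OrderTopology α] [DenselyOrdered α] [TopologicalSpace β]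
  [OrderTopology β]

theorem StrictMonoOn.continuousAt_invFunOn (hf : StrictMonoOn f s) {b : β}
    (hb : f '' s ∈ 𝓝 b) (hs : s ∈ 𝓝 (invFunOn f s b)) : ContinuousAt (invFunOn f s) b :=
  continuousAt_of_monotoneOn_of_image_mem_nhds hf.monotoneOn_invFunOn hb
    (by rwa [hf.image_invFunOn_image])

end InvFunOn

theorem StrictMonoOn.hasDerivAt_invFunOn {f : ℝ → ℝ} {s : Set ℝ} (hf : StrictMonoOn f s)
    {b f' : ℝ} (hb : f '' s ∈ 𝓝 b) (hs : s ∈ 𝓝 (invFunOn f s b))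
    (hf' : HasDerivAt f f' (invFunOn f s b)) (h0 : f' ≠ 0) :
    HasDerivAt (invFunOn f s) f'⁻¹ b :=
  hf'.of_local_left_inverse (hf.continuousAt_invFunOn hb hs) h0
    (eventually_of_mem hb fun _ hy => hf.invOn_invFunOn.2 hy)

theorem Set.OrdConnected.eq_of_hasDerivAt_eq_zero {E : Type*} [NormedAddCommGroup E]
    [NormedSpace ℝ E] {D : Set ℝ} (hD : D.OrdConnected) {f : ℝ → E}
    (hf : ∀ t ∈ D, HasDerivAt f 0 t) {a b : ℝ} (ha : a ∈ D) (hb : b ∈ D) : f a = f b := by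
  wlog hab : a ≤ b generalizing a b
  · exact (this hb ha (le_of_not_ge hab)).symm
  have hsub : Icc a b ⊆ D := hD.out ha hb
  exact (constant_of_has_deriv_right_zero
    (fun t ht => (hf t (hsub ht)).continuousAt.continuousWithinAt)
    (fun t ht => (hf t (hsub (Ico_subset_Icc_self ht))).hasDerivWithinAt) b
    (right_mem_Icc.2 hab)).symm

/-- `∫₀^μ s / (1 - s)⁵ ds`: once `ρ (1 - μ)⁴ / μ = c`, the flow gives `dt = -(c/4) μ / (1 - μ)⁵ dμ`,
so `(c/4) · extinctionClock μ` is the time left before `μ` reaches `0`. -/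
noncomputable def extinctionClock (μ : ℝ) : ℝ :=
  (1 - μ)⁻¹ ^ 4 / 4 - (1 - μ)⁻¹ ^ 3 / 3 + 1 / 12

theorem extinctionClock_zero : extinctionClock 0 = 0 := by
  norm_num [extinctionClock]

theorem hasDerivAt_extinctionClock {μ : ℝ} (hμ : μ ≠ 1) :
    HasDerivAt extinctionClock (μ / (1 - μ) ^ 5) μ := by
  have h1 : (1 : ℝ) - μ ≠ 0 := sub_ne_zero.2 hμ.symm
  have hx := ((hasDerivAt_id' μ).const_sub 1).fun_inv h1
  refine (((hx.pow 4).div_const 4).sub ((hx.pow 3).div_const 3)).add_const _ |>.congr_deriv ?_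
  simp only [inv_pow]
  field_simp
  ring

theorem strictMonoOn_extinctionClock : StrictMonoOn extinctionClock (Ico 0 1) := by
  refine strictMonoOn_of_deriv_pos (convex_Ico 0 1)
    (fun μ hμ => (hasDerivAt_extinctionClock hμ.2.ne).continuousAt.continuousWithinAt)
    fun μ hμ => ?_
  rw [interior_Ico] at hμ
  have : 0 < 1 - μ := sub_pos.2 hμ.2
  rw [(hasDerivAt_extinctionClock hμ.2.ne).deriv]
  exact div_pos hμ.1 (pow_pos this 5)

theorem le_extinctionClock_one_sub_inv {s : ℝ} (hs : 0 ≤ s) :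
    s ≤ extinctionClock (1 - (s + 2)⁻¹) := by
  simp only [extinctionClock, sub_sub_cancel, inv_inv]
  nlinarith [pow_le_pow_left₀ (by norm_num : (0 : ℝ) ≤ 2) (by linarith : 2 ≤ s + 2) 3]

theorem image_extinctionClock : extinctionClock '' Ico 0 1 = Ici 0 := by
  apply Subset.antisymm
  · rintro _ ⟨μ, hμ, rfl⟩
    rw [mem_Ici, ← extinctionClock_zero]
    exact strictMonoOn_extinctionClock.monotoneOn (left_mem_Ico.2 one_pos) hμ hμ.1
  · intro s (hs : 0 ≤ s)
    set b := 1 - (s + 2)⁻¹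
    have hb : b ∈ Ico 0 1 := by
      constructor
      · rw [sub_nonneg]; exact inv_le_one_of_one_le₀ (by linarith)
      · simp only [b, sub_lt_self_iff, inv_pos]; linarith
    have hsub : Icc 0 b ⊆ Ico 0 1 := Icc_subset_Ico_right hb.2
    have hcont : ContinuousOn extinctionClock (Icc 0 b) := fun μ hμ =>
      (hasDerivAt_extinctionClock (hsub hμ).2.ne).continuousAt.continuousWithinAt
    obtain ⟨μ, hμ, hμs⟩ := intermediate_value_Icc hb.1 hcont
      ⟨by rwa [extinctionClock_zero], le_extinctionClock_one_sub_inv hs⟩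
    exact ⟨μ, hsub hμ, hμs⟩

noncomputable def extinctionClockInv : ℝ → ℝ :=
  invFunOn extinctionClock (Ico 0 1)

theorem extinctionClock_extinctionClockInv {s : ℝ} (hs : 0 ≤ s) :
    extinctionClock (extinctionClockInv s) = s :=
  strictMonoOn_extinctionClock.invOn_invFunOn.2 (image_extinctionClock ▸ hs)

theorem extinctionClockInv_extinctionClock {μ : ℝ} (hμ : μ ∈ Ico 0 1) :
    extinctionClockInv (extinctionClock μ) = μ :=
  strictMonoOn_extinctionClock.invOn_invFunOn.1 hμ

theorem image_extinctionClockInv : extinctionClockInv '' Ici 0 = Ico 0 1 := by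
  rw [← image_extinctionClock]
  exact strictMonoOn_extinctionClock.image_invFunOn_image

theorem extinctionClockInv_zero : extinctionClockInv 0 = 0 := by
  simpa [extinctionClock_zero] using
    extinctionClockInv_extinctionClock (left_mem_Ico.2 zero_lt_one)

theorem extinctionClockInv_mem_Ioo {s : ℝ} (hs : 0 < s) : extinctionClockInv s ∈ Ioo 0 1 := by
  obtain ⟨h0, h1⟩ : extinctionClockInv s ∈ Ico 0 1 :=
    image_extinctionClockInv ▸ mem_image_of_mem _ hs.le
  refine ⟨h0.lt_of_ne fun h => hs.ne ?_, h1⟩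
  rw [← extinctionClock_extinctionClockInv hs.le, ← h, extinctionClock_zero]

theorem hasDerivAt_extinctionClockInv {s : ℝ} (hs : 0 < s) :
    HasDerivAt extinctionClockInv
      (extinctionClockInv s / (1 - extinctionClockInv s) ^ 5)⁻¹ s := by
  have hmem := extinctionClockInv_mem_Ioo hs
  refine strictMonoOn_extinctionClock.hasDerivAt_invFunOn ?_ (Ico_mem_nhds hmem.1 hmem.2)
    (hasDerivAt_extinctionClock hmem.2.ne) (div_pos hmem.1 (pow_pos (sub_pos.2 hmem.2) 5)).ne'
  rw [image_extinctionClock]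
  exact Ici_mem_nhds hs

theorem continuousWithinAt_extinctionClockInv_zero :
    ContinuousWithinAt extinctionClockInv (Ici 0) 0 := by
  refine continuousWithinAt_right_of_monotoneOn_of_image_mem_nhdsWithin
    (image_extinctionClock ▸ strictMonoOn_extinctionClock.monotoneOn_invFunOn)
    self_mem_nhdsWithin ?_
  rw [image_extinctionClockInv, extinctionClockInv_zero]
  exact Ico_mem_nhdsGE zero_lt_one

def IsChowYangSolution (D : Set ℝ) (ρ μ : ℝ → ℝ) : Prop :=
  ∀ t ∈ D, 0 < ρ t ∧ 0 < μ t ∧ HasDerivAt μ (4 * (μ t - 1) / ρ t) t ∧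
    HasDerivAt ρ (-4 * ((μ t)⁻¹ + 3)) t

noncomputable def chowYangInvariant (ρ μ : ℝ) : ℝ :=
  ρ * (1 - μ) ^ 4 / μ

theorem chowYangInvariant_pos {ρ μ : ℝ} (hρ : 0 < ρ) (hμ : 0 < μ) (hμ1 : μ < 1) :
    0 < chowYangInvariant ρ μ := by
  have : 0 < 1 - μ := sub_pos.2 hμ1
  unfold chowYangInvariant
  positivity

theorem chowYangInvariant_one (ρ : ℝ) : chowYangInvariant ρ 1 = 0 := by
  simp [chowYangInvariant]

theorem eq_of_chowYangInvariant_eq {ρ μ c : ℝ} (hμ : 0 < μ) (hμ1 : μ < 1)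
    (hc : chowYangInvariant ρ μ = c) : ρ = c * μ / (1 - μ) ^ 4 := by
  have : 0 < 1 - μ := sub_pos.2 hμ1
  rw [← hc, chowYangInvariant]
  field_simp

namespace IsChowYangSolution

variable {D : Set ℝ} {ρ μ : ℝ → ℝ}

theorem hasDerivAt_invariant (h : IsChowYangSolution D ρ μ) {t : ℝ} (ht : t ∈ D) :
    HasDerivAt (fun s => chowYangInvariant (ρ s) (μ s)) 0 t := by
  obtain ⟨hρ0, hμ0, hμ', hρ'⟩ := h t ht
  refine ((hρ'.fun_mul ((hμ'.const_sub 1).fun_pow 4)).div hμ' hμ0.ne').congr_deriv ?_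
  field_simp
  ring

theorem invariant_eq (h : IsChowYangSolution D ρ μ) (hD : D.OrdConnected) {a b : ℝ}
    (ha : a ∈ D) (hb : b ∈ D) :
    chowYangInvariant (ρ a) (μ a) = chowYangInvariant (ρ b) (μ b) :=
  hD.eq_of_hasDerivAt_eq_zero (fun _ ht => h.hasDerivAt_invariant ht) ha hb

theorem mu_lt_one (h : IsChowYangSolution D ρ μ) (hD : D.OrdConnected) {t₀ : ℝ} (ht₀ : t₀ ∈ D)
    (hμ₀ : μ t₀ < 1) {t : ℝ} (ht : t ∈ D) : μ t < 1 := by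
  by_contra! hle
  have hcont : ContinuousOn μ D := fun s hs => (h s hs).2.2.1.continuousAt.continuousWithinAt
  obtain ⟨s, hs, hμs⟩ := hD.isPreconnected.intermediate_value ht₀ ht hcont ⟨hμ₀.le, hle⟩
  have hpos := chowYangInvariant_pos (h t₀ ht₀).1 (h t₀ ht₀).2.1 hμ₀
  rw [h.invariant_eq hD ht₀ hs, hμs, chowYangInvariant_one] at hpos
  exact lt_irrefl 0 hpos

theorem hasDerivAt_add_extinctionClock (h : IsChowYangSolution D ρ μ) {c : ℝ}
    (hc : ∀ t ∈ D, chowYangInvariant (ρ t) (μ t) = c) (hμ1 : ∀ t ∈ D, μ t < 1) {t : ℝ}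
    (ht : t ∈ D) : HasDerivAt (fun s => s + c / 4 * extinctionClock (μ s)) 0 t := by
  obtain ⟨hρ0, hμ0, hμ', -⟩ := h t ht
  have h1 : 0 < 1 - μ t := sub_pos.2 (hμ1 t ht)
  refine ((hasDerivAt_id' t).add
    (((hasDerivAt_extinctionClock (hμ1 t ht).ne).comp t hμ').const_mul (c / 4))).congr_deriv ?_
  rw [← hc t ht, chowYangInvariant]
  field_simp
  ring

end IsChowYangSolution

/-- The solution with invariant `c` that dies out at time `T`. -/
noncomputable def chowYangMu (c T t : ℝ) : ℝ :=
  extinctionClockInv (4 * (T - t) / c)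

noncomputable def chowYangRho (c T t : ℝ) : ℝ :=
  c * chowYangMu c T t / (1 - chowYangMu c T t) ^ 4

section Explicit

variable {c : ℝ} (T : ℝ)

theorem hasDerivAt_chowYangMu (hc : 0 < c) {t : ℝ} (ht : t < T) :
    HasDerivAt (chowYangMu c T) (4 * (chowYangMu c T t - 1) / chowYangRho c T t) t := by
  have hs : 0 < 4 * (T - t) / c := by have := sub_pos.2 ht; positivity
  obtain ⟨hμ0, hμ1⟩ := extinctionClockInv_mem_Ioo hs
  have h1 : 0 < 1 - extinctionClockInv (4 * (T - t) / c) := sub_pos.2 hμ1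
  refine ((hasDerivAt_extinctionClockInv hs).comp t
    ((((hasDerivAt_id' t).const_sub T).const_mul 4).div_const c)).congr_deriv ?_
  simp only [chowYangRho, chowYangMu]
  field_simp
  ring

theorem isChowYangSolution_explicit (hc : 0 < c) :
    IsChowYangSolution (Iio T) (chowYangRho c T) (chowYangMu c T) := by
  intro t (ht : t < T)
  have hs : 0 < 4 * (T - t) / c := by have := sub_pos.2 ht; positivity
  obtain ⟨hμ0, hμ1⟩ : chowYangMu c T t ∈ Ioo 0 1 := extinctionClockInv_mem_Ioo hs
  have h1 : 0 < 1 - chowYangMu c T t := sub_pos.2 hμ1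
  have hμ' := hasDerivAt_chowYangMu T hc ht
  refine ⟨by unfold chowYangRho; positivity, hμ0, hμ', ?_⟩
  refine ((hμ'.const_mul c).div ((hμ'.const_sub 1).fun_pow 4) (by positivity)).congr_deriv ?_
  simp only [chowYangRho]
  field_simp
  ring

theorem tendsto_chowYangMu (hc : 0 < c) : Tendsto (chowYangMu c T) (𝓝[<] T) (𝓝 0) := by
  have harg : Tendsto (fun t => 4 * (T - t) / c) (𝓝[<] T) (𝓝[≥] 0) := by
    refine tendsto_nhdsWithin_of_tendsto_nhds_of_eventually_within _ ?_ ?_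
    · have : Continuous (fun t => 4 * (T - t) / c) := by fun_prop
      simpa using this.continuousAt.tendsto.mono_left (nhdsWithin_le_nhds (a := T))
    · filter_upwards [self_mem_nhdsWithin] with t (ht : t < T)
      have := sub_pos.2 ht
      exact mem_Ici.2 (by positivity)
  have := continuousWithinAt_extinctionClockInv_zero.tendsto.comp harg
  rwa [extinctionClockInv_zero] at this

theorem tendsto_chowYangRho (hc : 0 < c) : Tendsto (chowYangRho c T) (𝓝[<] T) (𝓝 0) := by
  have hμ := tendsto_chowYangMu T hc
  have := (hμ.const_mul c).div ((hμ.const_sub 1).pow 4) (by norm_num)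
  rwa [mul_zero, zero_div] at this

end Explicit

theorem IsChowYangSolution.eq_explicit {D : Set ℝ} {ρ μ : ℝ → ℝ} (h : IsChowYangSolution D ρ μ)
    {c T : ℝ} (hc : ∀ t ∈ D, chowYangInvariant (ρ t) (μ t) = c) (hμ1 : ∀ t ∈ D, μ t < 1)
    (hT : ∀ t ∈ D, t + c / 4 * extinctionClock (μ t) = T) {t : ℝ} (ht : t ∈ D) :
    t < T ∧ ρ t = chowYangRho c T t ∧ μ t = chowYangMu c T t := by
  obtain ⟨hρ0, hμ0, -⟩ := h t ht
  have hc0 : 0 < c := hc t ht ▸ chowYangInvariant_pos hρ0 hμ0 (hμ1 t ht)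
  have hclock : 0 < extinctionClock (μ t) := extinctionClock_zero ▸
    strictMonoOn_extinctionClock (left_mem_Ico.2 one_pos) ⟨hμ0.le, hμ1 t ht⟩ hμ0
  have hμ : μ t = chowYangMu c T t := by
    have harg : 4 * (T - t) / c = extinctionClock (μ t) := by
      rw [← hT t ht]
      field_simp
      ring
    rw [chowYangMu, harg, extinctionClockInv_extinctionClock ⟨hμ0.le, hμ1 t ht⟩]
  refine ⟨?_, ?_, hμ⟩
  · rw [← hT t ht]
    exact lt_add_of_pos_right t (by positivity)
  · rw [chowYangRho, ← hμ]
    exact eq_of_chowYangInvariant_eq hμ0 (hμ1 t ht) (hc t ht)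

theorem chowYang_flow_extinction_below_general (D : Set ℝ)
    (hDconn : D.OrdConnected) (h0D : (0 : ℝ) ∈ D) (ρ μ : ℝ → ℝ)
    (hρpos : ∀ t ∈ D, 0 < ρ t) (hμpos : ∀ t ∈ D, 0 < μ t)
    (hμ : ∀ t ∈ D, HasDerivAt μ (4 * (μ t - 1) / ρ t) t)
    (hρ : ∀ t ∈ D, HasDerivAt ρ (-4 * ((μ t)⁻¹ + 3)) t)
    (hinit : μ 0 < 1)
    (hmax : ∀ (D' : Set ℝ) (ρ' μ' : ℝ → ℝ), IsOpen D' → D'.OrdConnected → D ⊆ D' →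
      (∀ t ∈ D, ρ' t = ρ t ∧ μ' t = μ t) →
      (∀ t ∈ D', 0 < ρ' t ∧ 0 < μ' t ∧
        HasDerivAt μ' (4 * (μ' t - 1) / ρ' t) t ∧
        HasDerivAt ρ' (-4 * ((μ' t)⁻¹ + 3)) t) → D' = D) :
    ∃ T : ℝ, 0 < T ∧ D ∩ Set.Ici 0 = Set.Ico 0 T ∧
      Filter.Tendsto μ (nhdsWithin T (Set.Iio T)) (nhds 0) ∧
      Filter.Tendsto ρ (nhdsWithin T (Set.Iio T)) (nhds 0) := by
  have h : IsChowYangSolution D ρ μ := fun t ht => ⟨hρpos t ht, hμpos t ht, hμ t ht, hρ t ht⟩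
  set c := chowYangInvariant (ρ 0) (μ 0)
  set T := c / 4 * extinctionClock (μ 0)
  have hc0 : 0 < c := chowYangInvariant_pos (hρpos 0 h0D) (hμpos 0 h0D) hinit
  have hc : ∀ t ∈ D, chowYangInvariant (ρ t) (μ t) = c := fun t ht => h.invariant_eq hDconn ht h0D
  have hμ1 : ∀ t ∈ D, μ t < 1 := fun t ht => h.mu_lt_one hDconn h0D hinit ht
  have hT : ∀ t ∈ D, t + c / 4 * extinctionClock (μ t) = T := fun t ht => by
    simpa using hDconn.eq_of_hasDerivAt_eq_zero
      (fun s hs => h.hasDerivAt_add_extinctionClock hc hμ1 hs) ht h0D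
  have hexp := fun t (ht : t ∈ D) => h.eq_explicit hc hμ1 hT ht
  have hDT : Iio T = D := hmax _ _ _ isOpen_Iio ordConnected_Iio (fun t ht => (hexp t ht).1)
    (fun t ht => ⟨(hexp t ht).2.1.symm, (hexp t ht).2.2.symm⟩) (isChowYangSolution_explicit T hc0)
  have hagree : ∀ t ∈ Iio T, ρ t = chowYangRho c T t ∧ μ t = chowYangMu c T t :=
    fun t ht => (hexp t (hDT ▸ ht)).2
  refine ⟨T, (hDT ▸ h0D : (0 : ℝ) ∈ Iio T), by rw [← hDT, inter_comm, Ici_inter_Iio], ?_, ?_⟩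
  · exact (tendsto_chowYangMu T hc0).congr'
      (eventually_nhdsWithin_of_forall fun t ht => (hagree t ht).2.symm)
  · exact (tendsto_chowYangRho T hc0).congr'
      (eventually_nhdsWithin_of_forall fun t ht => (hagree t ht).1.symm)

/-- For a maximal positive solution of `ρ μ' = 4(μ−1)`, `ρ' = −4(μ⁻¹+3)` with
`μ(0) < 1`: there is a finite extinction time `T > 0` with `μ(t) → 0` and
`ρ(t) → 0` as `t → T⁻`. -/
theorem chowYang_flow_extinction_below (D : Set ℝ) (hDopen : IsOpen D)
    (hDconn : D.OrdConnected) (h0D : (0 : ℝ) ∈ D) (ρ μ : ℝ → ℝ)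
    (hρpos : ∀ t ∈ D, 0 < ρ t) (hμpos : ∀ t ∈ D, 0 < μ t)
    (hμ : ∀ t ∈ D, HasDerivAt μ (4 * (μ t - 1) / ρ t) t)
    (hρ : ∀ t ∈ D, HasDerivAt ρ (-4 * ((μ t)⁻¹ + 3)) t)
    (hinit : μ 0 < 1)
    (hmax : ∀ (D' : Set ℝ) (ρ' μ' : ℝ → ℝ), IsOpen D' → D'.OrdConnected → D ⊆ D' →
      (∀ t ∈ D, ρ' t = ρ t ∧ μ' t = μ t) →
      (∀ t ∈ D', 0 < ρ' t ∧ 0 < μ' t ∧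
        HasDerivAt μ' (4 * (μ' t - 1) / ρ' t) t ∧
        HasDerivAt ρ' (-4 * ((μ' t)⁻¹ + 3)) t) → D' = D) :
    ∃ T : ℝ, 0 < T ∧ D ∩ Set.Ici 0 = Set.Ico 0 T ∧
      Filter.Tendsto μ (nhdsWithin T (Set.Iio T)) (nhds 0) ∧
      Filter.Tendsto ρ (nhdsWithin T (Set.Iio T)) (nhds 0) :=
  chowYang_flow_extinction_below_general D hDconn h0D ρ μ hρpos hμpos hμ hρ hinit hmax
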